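/- arXiv:2310.20538 — 2 statements merged into one kernel-verified Lean document; each statement's English description precedes it below -/
import Mathlib

section
/- Let θ ∈ ℝ with sinθ·cosθ ≠ 0, ρ > 0 and C ∈ ℝ, and suppose H satisfies H'₃ = −tanθ·H'₄ at every point (x₂,x₃,x₄) with x₄ = −cotθ·x₃ + C and x₃ > 0. Then the immersion F(u₁,u₂,u₃) = (u₁, u₃, ρe^{u₂}, −cotθ·ρe^{u₂} + C), defined on V = ℝ³ with unit normal ξ(u) = (ρe^{u₂}/β)(0, 0, cosθ, sinθ), has constant mean curvature: (1/3)Σᵢⱼ ĝⁱʲhᵢⱼ = cosθ/β at every point of V. -/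
open scoped BigOperators

/-- Partial derivative of `f : ℝⁿ → ℝ` in the `i`-th coordinate direction. -/
noncomputable def pd {n : ℕ} (i : Fin n) (f : (Fin n → ℝ) → ℝ) (x : Fin n → ℝ) : ℝ :=
  deriv (fun t => f (Function.update x i t)) (x i)

/-- Christoffel symbols `Γᵏᵢⱼ` of a metric field `g`. -/
noncomputable def christoffel {n : ℕ} (g : (Fin n → ℝ) → Matrix (Fin n) (Fin n) ℝ)
    (x : Fin n → ℝ) (k i j : Fin n) : ℝ :=
  (1 / 2) * ∑ l, (g x)⁻¹ k l *
    (pd i (fun y => g y l j) x + pd j (fun y => g y l i) x - pd l (fun y => g y i j) x)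

/-- `curv g x i j k l` is the `l`-th component of `R(∂ᵢ,∂ⱼ)∂ₖ` at `x`
(convention `R(X,Y) = [∇_X,∇_Y] − ∇_{[X,Y]}`). -/
noncomputable def curv {n : ℕ} (g : (Fin n → ℝ) → Matrix (Fin n) (Fin n) ℝ)
    (x : Fin n → ℝ) (i j k l : Fin n) : ℝ :=
  pd i (fun y => christoffel g y l j k) x - pd j (fun y => christoffel g y l i k) x
    + ∑ m, (christoffel g x l i m * christoffel g x m j k
        - christoffel g x l j m * christoffel g x m i k)

/-- The Siklos metric with parameter `β` and defining function `H = H(x₂,x₃,x₄)`;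
indices `0,1,2,3` correspond to the coordinates `x₁,x₂,x₃,x₄`. -/
noncomputable def siklos (β : ℝ) (H : ℝ → ℝ → ℝ → ℝ) (x : Fin 4 → ℝ) :
    Matrix (Fin 4) (Fin 4) ℝ :=
  Matrix.of fun i j =>
    if (i = 0 ∧ j = 1) ∨ (i = 1 ∧ j = 0) ∨ (i = 2 ∧ j = 2) ∨ (i = 3 ∧ j = 3) then
      β ^ 2 / x 2 ^ 2
    else if i = 1 ∧ j = 1 then β ^ 2 / x 2 ^ 2 * H (x 1) (x 2) (x 3)
    else 0

/-- `H'₂`. -/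
noncomputable def H2 (H : ℝ → ℝ → ℝ → ℝ) (a b c : ℝ) : ℝ := deriv (fun t => H t b c) a
/-- `H'₃`. -/
noncomputable def H3 (H : ℝ → ℝ → ℝ → ℝ) (a b c : ℝ) : ℝ := deriv (fun t => H a t c) b
/-- `H'₄`. -/
noncomputable def H4 (H : ℝ → ℝ → ℝ → ℝ) (a b c : ℝ) : ℝ := deriv (fun t => H a b t) c
/-- `H''₂₃`. -/
noncomputable def H23 (H : ℝ → ℝ → ℝ → ℝ) (a b c : ℝ) : ℝ := deriv (fun t => H3 H t b c) a
/-- `H''₃₃`. -/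
noncomputable def H33 (H : ℝ → ℝ → ℝ → ℝ) (a b c : ℝ) : ℝ := deriv (fun t => H3 H a t c) b
/-- `H''₃₄`. -/
noncomputable def H34 (H : ℝ → ℝ → ℝ → ℝ) (a b c : ℝ) : ℝ := deriv (fun t => H4 H a t c) b
/-- `H''₄₄`. -/
noncomputable def H44 (H : ℝ → ℝ → ℝ → ℝ) (a b c : ℝ) : ℝ := deriv (fun t => H4 H a b t) c

/-- Ricci tensor `Ricⱼₖ = Σᵢ (R(∂ᵢ,∂ⱼ)∂ₖ)ⁱ` of the Siklos metric. -/
noncomputable def ricci (β : ℝ) (H : ℝ → ℝ → ℝ → ℝ) (x : Fin 4 → ℝ) (j k : Fin 4) : ℝ :=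
  ∑ i, curv (siklos β H) x i j k i

/-- Scalar curvature of the Siklos metric. -/
noncomputable def scal (β : ℝ) (H : ℝ → ℝ → ℝ → ℝ) (x : Fin 4 → ℝ) : ℝ :=
  ∑ j, ∑ k, (siklos β H x)⁻¹ j k * ricci β H x j k

/-- `g(X,Y) = Σᵢⱼ gᵢⱼ Xⁱ Yʲ`. -/
noncomputable def gApply (M : Matrix (Fin 4) (Fin 4) ℝ) (X Y : Fin 4 → ℝ) : ℝ :=
  ∑ i, ∑ j, M i j * X i * Y j

/-- Curvature applied to arbitrary vectors: `R(X,Y)Z = Σᵢⱼₖ XⁱYʲZᵏ R(∂ᵢ,∂ⱼ)∂ₖ`. -/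
noncomputable def Rmulti (β : ℝ) (H : ℝ → ℝ → ℝ → ℝ) (x : Fin 4 → ℝ)
    (X Y Z : Fin 4 → ℝ) (l : Fin 4) : ℝ :=
  ∑ i, ∑ j, ∑ k, X i * Y j * Z k * curv (siklos β H) x i j k l

/-- `Rₐᵦ𝒸𝒹 = g(R(∂ₐ,∂ᵦ)∂𝒹, ∂𝒸)`. -/
noncomputable def Rlow (β : ℝ) (H : ℝ → ℝ → ℝ → ℝ) (x : Fin 4 → ℝ) (a b c d : Fin 4) : ℝ :=
  ∑ l, siklos β H x l c * curv (siklos β H) x a b d l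

/-- The Weyl tensor (in dimension 4) of the Siklos metric. -/
noncomputable def weyl (β : ℝ) (H : ℝ → ℝ → ℝ → ℝ) (x : Fin 4 → ℝ) (a b c d : Fin 4) : ℝ :=
  Rlow β H x a b c d
    - (1 / 2) * (siklos β H x a c * ricci β H x b d - siklos β H x a d * ricci β H x b c
        + siklos β H x b d * ricci β H x a c - siklos β H x b c * ricci β H x a d)
    + scal β H x / 6 *
        (siklos β H x a c * siklos β H x b d - siklos β H x a d * siklos β H x b c)

/-- Coordinate tangent vector `F_{uᵢ}` of an immersion `F : ℝ³ → ℝ⁴`. -/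
noncomputable def Fu (F : (Fin 3 → ℝ) → Fin 4 → ℝ) (i : Fin 3) (u : Fin 3 → ℝ) :
    Fin 4 → ℝ := fun k => pd i (fun v => F v k) u

/-- Ambient covariant derivative `DᵢF_{uⱼ}` along `F`, for the Siklos metric. -/
noncomputable def ambD (β : ℝ) (H : ℝ → ℝ → ℝ → ℝ) (F : (Fin 3 → ℝ) → Fin 4 → ℝ)
    (i j : Fin 3) (u : Fin 3 → ℝ) : Fin 4 → ℝ :=
  fun k => pd i (fun v => Fu F j v k) u
    + ∑ l, ∑ m, christoffel (siklos β H) (F u) k l m * Fu F i u l * Fu F j u m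

/-- Second fundamental form `hᵢⱼ = g(DᵢF_{uⱼ}, ξ)` of `F` with unit normal `ξ`. -/
noncomputable def sff (β : ℝ) (H : ℝ → ℝ → ℝ → ℝ) (F ξ : (Fin 3 → ℝ) → Fin 4 → ℝ)
    (i j : Fin 3) (u : Fin 3 → ℝ) : ℝ :=
  gApply (siklos β H (F u)) (ambD β H F i j u) (ξ u)

/-- Induced metric `ĝᵢⱼ = g(F_{uᵢ}, F_{uⱼ})` of the hypersurface. -/
noncomputable def inducedMetric (β : ℝ) (H : ℝ → ℝ → ℝ → ℝ) (F : (Fin 3 → ℝ) → Fin 4 → ℝ)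
    (u : Fin 3 → ℝ) : Matrix (Fin 3) (Fin 3) ℝ :=
  Matrix.of fun i j => gApply (siklos β H (F u)) (Fu F i u) (Fu F j u)

/-- Covariant derivative of the second fundamental form,
`(∇h)ₖᵢⱼ = ∂ₖhᵢⱼ − Σₗ Γ̂ˡₖᵢ hₗⱼ − Σₗ Γ̂ˡₖⱼ hᵢₗ`. -/
noncomputable def nablah (β : ℝ) (H : ℝ → ℝ → ℝ → ℝ) (F ξ : (Fin 3 → ℝ) → Fin 4 → ℝ)
    (k i j : Fin 3) (u : Fin 3 → ℝ) : ℝ :=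
  pd k (fun v => sff β H F ξ i j v) u
    - ∑ l, christoffel (inducedMetric β H F) u l k i * sff β H F ξ l j u
    - ∑ l, christoffel (inducedMetric β H F) u l k j * sff β H F ξ i l u

/-- Mean curvature `(1/3) Σᵢⱼ ĝⁱʲ hᵢⱼ` of the hypersurface. -/
noncomputable def meanCurv (β : ℝ) (H : ℝ → ℝ → ℝ → ℝ) (F ξ : (Fin 3 → ℝ) → Fin 4 → ℝ)
    (u : Fin 3 → ℝ) : ℝ :=
  (1 / 3) * ∑ i, ∑ j, (inducedMetric β H F u)⁻¹ i j * sff β H F ξ i j u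

lemma deriv_invsq (β a : ℝ) (ha : a ≠ 0) :
    deriv (fun t : ℝ => β ^ 2 / t ^ 2) a = -2 * β ^ 2 / a ^ 3 := by
  have h1 : HasDerivAt (fun t : ℝ => t ^ 2) (2 * a) a := by
    simpa using hasDerivAt_pow 2 a
  have h2 := (h1.inv (pow_ne_zero 2 ha)).const_mul (β ^ 2)
  have h3 : HasDerivAt (fun t : ℝ => β ^ 2 / t ^ 2) (β ^ 2 * (-(2 * a) / (a ^ 2) ^ 2)) a := by
    simpa [div_eq_mul_inv] using h2
  rw [h3.deriv]; field_simp

lemma siklos_entries (β : ℝ) (H : ℝ → ℝ → ℝ → ℝ) (x : Fin 4 → ℝ) :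
    siklos β H x = Matrix.of ![![0, β ^ 2 / x 2 ^ 2, 0, 0],
      ![β ^ 2 / x 2 ^ 2, β ^ 2 / x 2 ^ 2 * H (x 1) (x 2) (x 3), 0, 0],
      ![0, 0, β ^ 2 / x 2 ^ 2, 0], ![0, 0, 0, β ^ 2 / x 2 ^ 2]] := by
  ext i j
  fin_cases i <;> fin_cases j <;> simp [siklos, Matrix.vecHead, Matrix.vecTail]

noncomputable def siklosInv (β : ℝ) (H : ℝ → ℝ → ℝ → ℝ) (x : Fin 4 → ℝ) :
    Matrix (Fin 4) (Fin 4) ℝ :=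
  Matrix.of ![![-(x 2 ^ 2 / β ^ 2) * H (x 1) (x 2) (x 3), x 2 ^ 2 / β ^ 2, 0, 0],
    ![x 2 ^ 2 / β ^ 2, 0, 0, 0], ![0, 0, x 2 ^ 2 / β ^ 2, 0], ![0, 0, 0, x 2 ^ 2 / β ^ 2]]

lemma siklos_inv (β : ℝ) (H : ℝ → ℝ → ℝ → ℝ) (x : Fin 4 → ℝ) (hβ : β ≠ 0) (hx : x 2 ≠ 0) :
    (siklos β H x)⁻¹ = siklosInv β H x := by
  apply Matrix.inv_eq_right_inv
  rw [siklos_entries]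
  ext i j
  fin_cases i <;> fin_cases j <;>
    simp [Matrix.mul_apply, Fin.sum_univ_four, siklosInv, Matrix.one_apply,
      Matrix.vecHead, Matrix.vecTail] <;>
    field_simp <;> ring

section chr
variable (β : ℝ) (H : ℝ → ℝ → ℝ → ℝ) (x : Fin 4 → ℝ)

lemma sik_ent (l m : Fin 4)
    (h : (l = 0 ∧ m = 0) ∨ (l = 0 ∧ m = 2) ∨ (l = 0 ∧ m = 3) ∨ (l = 2 ∧ m = 0) ∨
      (l = 2 ∧ m = 1) ∨ (l = 2 ∧ m = 3) ∨ (l = 3 ∧ m = 0) ∨ (l = 3 ∧ m = 1) ∨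
      (l = 3 ∧ m = 2) ∨ (l = 1 ∧ m = 2) ∨ (l = 1 ∧ m = 3)) :
    (fun y => siklos β H y l m) = fun _ => (0 : ℝ) := by
  funext y
  rcases h with ⟨h1,h2⟩|⟨h1,h2⟩|⟨h1,h2⟩|⟨h1,h2⟩|⟨h1,h2⟩|⟨h1,h2⟩|⟨h1,h2⟩|⟨h1,h2⟩|⟨h1,h2⟩|⟨h1,h2⟩|⟨h1,h2⟩ <;>
    subst h1 <;> subst h2 <;> simp [siklos]

lemma sik_phi (l m : Fin 4)
    (h : (l = 0 ∧ m = 1) ∨ (l = 1 ∧ m = 0) ∨ (l = 2 ∧ m = 2) ∨ (l = 3 ∧ m = 3)) :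
    (fun y => siklos β H y l m) = fun y => β ^ 2 / y 2 ^ 2 := by
  funext y
  rcases h with ⟨h1,h2⟩|⟨h1,h2⟩|⟨h1,h2⟩|⟨h1,h2⟩ <;> subst h1 <;> subst h2 <;> simp [siklos]

lemma pd_zero (i : Fin 4) : pd i (fun _ : Fin 4 → ℝ => (0 : ℝ)) x = 0 := by simp [pd]

lemma pd_phi2 (hx : x 2 ≠ 0) :
    pd 2 (fun y : Fin 4 → ℝ => β ^ 2 / y 2 ^ 2) x = -2 * β ^ 2 / x 2 ^ 3 := by
  simp only [pd, Function.update_apply, reduceIte]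
  exact deriv_invsq β (x 2) hx

lemma pd_phi_ne (i : Fin 4) (hi : ¬ ((2 : Fin 4) = i)) :
    pd i (fun y : Fin 4 → ℝ => β ^ 2 / y 2 ^ 2) x = 0 := by
  simp [pd, Function.update_apply, hi]
end chr

section chrval
variable (β : ℝ) (H : ℝ → ℝ → ℝ → ℝ) (x : Fin 4 → ℝ) (hβ : β ≠ 0) (hx : x 2 ≠ 0)
include hβ hx

lemma chr_red (k : Fin 4) (hk : k = 2 ∨ k = 3) (i j : Fin 4) :
    christoffel (siklos β H) x k i j = (1 / 2) * (x 2 ^ 2 / β ^ 2) *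
      (pd i (fun y => siklos β H y k j) x + pd j (fun y => siklos β H y k i) x
        - pd k (fun y => siklos β H y i j) x) := by
  rw [christoffel, Fin.sum_univ_four, siklos_inv β H x hβ hx]
  rcases hk with hk | hk <;> subst hk <;>
    simp [siklosInv, Matrix.vecHead, Matrix.vecTail] <;> ring

lemma Γ2_00 : christoffel (siklos β H) x 2 0 0 = 0 := by
  rw [chr_red β H x hβ hx 2 (Or.inl rfl),
    sik_ent β H 2 0 (by tauto), sik_ent β H 0 0 (by tauto)]
  simp [pd_zero]

lemma Γ2_01 : christoffel (siklos β H) x 2 0 1 = 1 / x 2 := by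
  rw [chr_red β H x hβ hx 2 (Or.inl rfl),
    sik_ent β H 2 1 (by tauto), sik_ent β H 2 0 (by tauto), sik_phi β H 0 1 (by tauto)]
  rw [pd_phi2 β x hx]
  simp [pd_zero]
  field_simp

lemma Γ2_10 : christoffel (siklos β H) x 2 1 0 = 1 / x 2 := by
  rw [chr_red β H x hβ hx 2 (Or.inl rfl),
    sik_ent β H 2 0 (by tauto), sik_ent β H 2 1 (by tauto), sik_phi β H 1 0 (by tauto)]
  rw [pd_phi2 β x hx]
  simp [pd_zero]
  field_simp

lemma Γ2_22 : christoffel (siklos β H) x 2 2 2 = -(1 / x 2) := by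
  rw [chr_red β H x hβ hx 2 (Or.inl rfl), sik_phi β H 2 2 (by tauto)]
  rw [pd_phi2 β x hx]
  field_simp; ring

lemma Γ2_23 : christoffel (siklos β H) x 2 2 3 = 0 := by
  rw [chr_red β H x hβ hx 2 (Or.inl rfl),
    sik_ent β H 2 3 (by tauto), sik_phi β H 2 2 (by tauto)]
  rw [pd_phi_ne β x 3 (by decide)]
  simp [pd_zero]

lemma Γ2_32 : christoffel (siklos β H) x 2 3 2 = 0 := by
  rw [chr_red β H x hβ hx 2 (Or.inl rfl),
    sik_phi β H 2 2 (by tauto), sik_ent β H 2 3 (by tauto), sik_ent β H 3 2 (by tauto)]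
  rw [pd_phi_ne β x 3 (by decide)]
  simp [pd_zero]

lemma Γ2_33 : christoffel (siklos β H) x 2 3 3 = 1 / x 2 := by
  rw [chr_red β H x hβ hx 2 (Or.inl rfl),
    sik_ent β H 2 3 (by tauto), sik_phi β H 3 3 (by tauto)]
  rw [pd_phi2 β x hx]
  simp [pd_zero]
  field_simp

lemma Γ3_00 : christoffel (siklos β H) x 3 0 0 = 0 := by
  rw [chr_red β H x hβ hx 3 (Or.inr rfl),
    sik_ent β H 3 0 (by tauto), sik_ent β H 0 0 (by tauto)]
  simp [pd_zero]

lemma Γ3_01 : christoffel (siklos β H) x 3 0 1 = 0 := by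
  rw [chr_red β H x hβ hx 3 (Or.inr rfl),
    sik_ent β H 3 1 (by tauto), sik_ent β H 3 0 (by tauto), sik_phi β H 0 1 (by tauto)]
  rw [pd_phi_ne β x 3 (by decide)]
  simp [pd_zero]

lemma Γ3_10 : christoffel (siklos β H) x 3 1 0 = 0 := by
  rw [chr_red β H x hβ hx 3 (Or.inr rfl),
    sik_ent β H 3 0 (by tauto), sik_ent β H 3 1 (by tauto), sik_phi β H 1 0 (by tauto)]
  rw [pd_phi_ne β x 3 (by decide)]
  simp [pd_zero]

lemma Γ3_22 : christoffel (siklos β H) x 3 2 2 = 0 := by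
  rw [chr_red β H x hβ hx 3 (Or.inr rfl),
    sik_ent β H 3 2 (by tauto), sik_phi β H 2 2 (by tauto)]
  rw [pd_phi_ne β x 3 (by decide)]
  simp [pd_zero]

lemma Γ3_23 : christoffel (siklos β H) x 3 2 3 = -(1 / x 2) := by
  rw [chr_red β H x hβ hx 3 (Or.inr rfl),
    sik_phi β H 3 3 (by tauto), sik_ent β H 3 2 (by tauto), sik_ent β H 2 3 (by tauto)]
  rw [pd_phi2 β x hx]
  simp [pd_zero]
  field_simp

lemma Γ3_32 : christoffel (siklos β H) x 3 3 2 = -(1 / x 2) := by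
  rw [chr_red β H x hβ hx 3 (Or.inr rfl),
    sik_ent β H 3 2 (by tauto), sik_phi β H 3 3 (by tauto)]
  rw [pd_phi2 β x hx]
  simp [pd_zero]
  field_simp

lemma Γ3_33 : christoffel (siklos β H) x 3 3 3 = 0 := by
  rw [chr_red β H x hβ hx 3 (Or.inr rfl), sik_phi β H 3 3 (by tauto)]
  rw [pd_phi_ne β x 3 (by decide)]
  simp

end chrval

lemma pd_const {n : ℕ} (i : Fin n) (x : Fin n → ℝ) (c : ℝ) :
    pd i (fun _ => c) x = 0 := by simp [pd]

lemma pd_rexp (ρ : ℝ) (u : Fin 3 → ℝ) :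
    pd 1 (fun v : Fin 3 → ℝ => ρ * Real.exp (v 1)) u = ρ * Real.exp (u 1) := by
  simp only [pd, Function.update_apply, reduceIte]
  exact ((Real.hasDerivAt_exp (u 1)).const_mul ρ).deriv

lemma pd_rexp' (a ρ C : ℝ) (u : Fin 3 → ℝ) :
    pd 1 (fun v : Fin 3 → ℝ => a * (ρ * Real.exp (v 1)) + C) u
      = a * (ρ * Real.exp (u 1)) := by
  simp only [pd, Function.update_apply, reduceIte]
  exact ((((Real.hasDerivAt_exp (u 1)).const_mul ρ).const_mul a).add_const C).deriv

lemma pd_rexp_ne (ρ : ℝ) (u : Fin 3 → ℝ) (i : Fin 3) (hi : ¬ ((1 : Fin 3) = i)) :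
    pd i (fun v : Fin 3 → ℝ => ρ * Real.exp (v 1)) u = 0 := by
  simp [pd, Function.update_apply, hi]

lemma pd_id (i : Fin 3) (u : Fin 3 → ℝ) : pd i (fun v : Fin 3 → ℝ => v i) u = 1 := by
  simp [pd, Function.update_apply]

noncomputable def Fl (θ ρ C : ℝ) : (Fin 3 → ℝ) → Fin 4 → ℝ :=
  fun u => ![u 0, u 2, ρ * Real.exp (u 1),
    -(Real.cos θ / Real.sin θ) * (ρ * Real.exp (u 1)) + C]

noncomputable def Xl (θ ρ C β : ℝ) : (Fin 3 → ℝ) → Fin 4 → ℝ :=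
  fun u => ![0, 0, ρ * Real.exp (u 1) / β * Real.cos θ,
    ρ * Real.exp (u 1) / β * Real.sin θ]

lemma Fu_0 (θ ρ C : ℝ) (v : Fin 3 → ℝ) :
    Fu (Fl θ ρ C) 0 v = ![1, 0, 0, 0] := by
  funext k
  fin_cases k <;>
    simp only [Fu, Fl, Matrix.cons_val_zero, Matrix.cons_val_one, Matrix.head_cons,
      Matrix.cons_val_two, Matrix.tail_cons, Matrix.cons_val_three]
  · simp [pd_id]
  · simp [pd, Function.update_apply]
  · simp [pd_rexp_ne ρ v 0 (by decide)]
  · simp [pd, Function.update_apply]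

lemma Fu_2 (θ ρ C : ℝ) (v : Fin 3 → ℝ) :
    Fu (Fl θ ρ C) 2 v = ![0, 1, 0, 0] := by
  funext k
  fin_cases k <;>
    simp only [Fu, Fl, Matrix.cons_val_zero, Matrix.cons_val_one, Matrix.head_cons,
      Matrix.cons_val_two, Matrix.tail_cons, Matrix.cons_val_three]
  · simp [pd, Function.update_apply]
  · simp [pd_id]
  · simp [pd_rexp_ne ρ v 2 (by decide)]
  · simp [pd, Function.update_apply]

lemma Fu_1 (θ ρ C : ℝ) (v : Fin 3 → ℝ) :
    Fu (Fl θ ρ C) 1 v = ![0, 0, ρ * Real.exp (v 1),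
      -(Real.cos θ / Real.sin θ) * (ρ * Real.exp (v 1))] := by
  funext k
  fin_cases k <;>
    simp only [Fu, Fl, Matrix.cons_val_zero, Matrix.cons_val_one, Matrix.head_cons,
      Matrix.cons_val_two, Matrix.tail_cons, Matrix.cons_val_three]
  · simp [pd, Function.update_apply]
  · simp [pd, Function.update_apply]
  · simp [pd_rexp]
  · simpa using pd_rexp' (-(Real.cos θ / Real.sin θ)) ρ C v

section main
variable (θ ρ C β : ℝ) (H : ℝ → ℝ → ℝ → ℝ) (u : Fin 3 → ℝ)
variable (hβ : β ≠ 0) (hρ : 0 < ρ)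

lemma Flu2 : Fl θ ρ C u 2 = ρ * Real.exp (u 1) := by simp [Fl]

include hρ in
lemma hFx2 : Fl θ ρ C u 2 ≠ 0 := by
  rw [Flu2]; positivity

include hβ hρ

lemma amb002 : ambD β H (Fl θ ρ C) 0 0 u 2 = 0 := by
  have hx := hFx2 θ ρ C u hρ
  simp only [ambD]
  rw [show (fun v => Fu (Fl θ ρ C) 0 v 2) = fun _ => (0 : ℝ) from
    funext fun v => by rw [Fu_0]; simp, pd_const]
  simp only [Fin.sum_univ_four, Fu_0]
  simp
  rw [Γ2_00 β H _ hβ hx]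

lemma amb003 : ambD β H (Fl θ ρ C) 0 0 u 3 = 0 := by
  have hx := hFx2 θ ρ C u hρ
  simp only [ambD]
  rw [show (fun v => Fu (Fl θ ρ C) 0 v 3) = fun _ => (0 : ℝ) from
    funext fun v => by rw [Fu_0]; simp, pd_const]
  simp only [Fin.sum_univ_four, Fu_0]
  simp
  rw [Γ3_00 β H _ hβ hx]

lemma amb022 : ambD β H (Fl θ ρ C) 0 2 u 2 = 1 / (ρ * Real.exp (u 1)) := by
  have hx := hFx2 θ ρ C u hρ
  simp only [ambD]
  rw [show (fun v => Fu (Fl θ ρ C) 2 v 2) = fun _ => (0 : ℝ) from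
    funext fun v => by rw [Fu_2]; simp, pd_const]
  simp only [Fin.sum_univ_four, Fu_0, Fu_2]
  simp
  rw [Γ2_01 β H _ hβ hx, Flu2]
  field_simp

lemma amb023 : ambD β H (Fl θ ρ C) 0 2 u 3 = 0 := by
  have hx := hFx2 θ ρ C u hρ
  simp only [ambD]
  rw [show (fun v => Fu (Fl θ ρ C) 2 v 3) = fun _ => (0 : ℝ) from
    funext fun v => by rw [Fu_2]; simp, pd_const]
  simp only [Fin.sum_univ_four, Fu_0, Fu_2]
  simp
  rw [Γ3_01 β H _ hβ hx]

lemma amb202 : ambD β H (Fl θ ρ C) 2 0 u 2 = 1 / (ρ * Real.exp (u 1)) := by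
  have hx := hFx2 θ ρ C u hρ
  simp only [ambD]
  rw [show (fun v => Fu (Fl θ ρ C) 0 v 2) = fun _ => (0 : ℝ) from
    funext fun v => by rw [Fu_0]; simp, pd_const]
  simp only [Fin.sum_univ_four, Fu_0, Fu_2]
  simp
  rw [Γ2_10 β H _ hβ hx, Flu2]
  field_simp

lemma amb203 : ambD β H (Fl θ ρ C) 2 0 u 3 = 0 := by
  have hx := hFx2 θ ρ C u hρ
  simp only [ambD]
  rw [show (fun v => Fu (Fl θ ρ C) 0 v 3) = fun _ => (0 : ℝ) from
    funext fun v => by rw [Fu_0]; simp, pd_const]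
  simp only [Fin.sum_univ_four, Fu_0, Fu_2]
  simp
  rw [Γ3_10 β H _ hβ hx]

variable (hs : Real.sin θ ≠ 0)

include hs in
lemma amb112 : ambD β H (Fl θ ρ C) 1 1 u 2
    = (Real.cos θ / Real.sin θ) ^ 2 * (ρ * Real.exp (u 1)) + 0 := by
  have hx := hFx2 θ ρ C u hρ
  simp only [ambD]
  rw [show (fun v => Fu (Fl θ ρ C) 1 v 2) = fun v => ρ * Real.exp (v 1) from
    funext fun v => by rw [Fu_1]; simp, pd_rexp]
  simp only [Fin.sum_univ_four, Fu_1]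
  simp
  rw [Γ2_22 β H _ hβ hx, Γ2_23 β H _ hβ hx, Γ2_32 β H _ hβ hx, Γ2_33 β H _ hβ hx, Flu2]
  have he : Real.exp (u 1) ≠ 0 := Real.exp_ne_zero _
  field_simp [hρ.ne', he, hs]
  ring

include hs in
lemma amb113 : ambD β H (Fl θ ρ C) 1 1 u 3
    = (Real.cos θ / Real.sin θ) * (ρ * Real.exp (u 1)) + 0 := by
  have hx := hFx2 θ ρ C u hρ
  simp only [ambD]
  rw [show (fun v => Fu (Fl θ ρ C) 1 v 3)
      = fun v => -(Real.cos θ / Real.sin θ) * (ρ * Real.exp (v 1)) + 0 from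
    funext fun v => by rw [Fu_1]; simp, pd_rexp']
  simp only [Fin.sum_univ_four, Fu_1]
  simp
  rw [Γ3_22 β H _ hβ hx, Γ3_23 β H _ hβ hx, Γ3_32 β H _ hβ hx, Γ3_33 β H _ hβ hx, Flu2]
  have he : Real.exp (u 1) ≠ 0 := Real.exp_ne_zero _
  field_simp [hρ.ne', he, hs]
  ring

end main

section main2
variable (θ ρ C β : ℝ) (H : ℝ → ℝ → ℝ → ℝ) (u : Fin 3 → ℝ)
variable (hβ : β ≠ 0) (hρ : 0 < ρ) (hs : Real.sin θ ≠ 0)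
include hβ hρ

lemma sff00 : sff β H (Fl θ ρ C) (Xl θ ρ C β) 0 0 u = 0 := by
  simp only [sff, gApply, Fin.sum_univ_four]
  rw [siklos_entries]
  simp [Xl, Matrix.vecHead, Matrix.vecTail,
    amb002 θ ρ C β H u hβ hρ, amb003 θ ρ C β H u hβ hρ]

lemma sff02 : sff β H (Fl θ ρ C) (Xl θ ρ C β) 0 2 u
    = β * Real.cos θ / (ρ * Real.exp (u 1)) ^ 2 := by
  have he : Real.exp (u 1) ≠ 0 := Real.exp_ne_zero _
  simp only [sff, gApply, Fin.sum_univ_four]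
  rw [siklos_entries]
  simp [Xl, Fl, Matrix.vecHead, Matrix.vecTail,
    amb022 θ ρ C β H u hβ hρ, amb023 θ ρ C β H u hβ hρ]
  field_simp

lemma sff20 : sff β H (Fl θ ρ C) (Xl θ ρ C β) 2 0 u
    = β * Real.cos θ / (ρ * Real.exp (u 1)) ^ 2 := by
  have he : Real.exp (u 1) ≠ 0 := Real.exp_ne_zero _
  simp only [sff, gApply, Fin.sum_univ_four]
  rw [siklos_entries]
  simp [Xl, Fl, Matrix.vecHead, Matrix.vecTail,
    amb202 θ ρ C β H u hβ hρ, amb203 θ ρ C β H u hβ hρ]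
  field_simp

include hs in
lemma sff11 : sff β H (Fl θ ρ C) (Xl θ ρ C β) 1 1 u
    = β * ((Real.cos θ / Real.sin θ) ^ 2 * Real.cos θ
        + (Real.cos θ / Real.sin θ) * Real.sin θ) := by
  have he : Real.exp (u 1) ≠ 0 := Real.exp_ne_zero _
  simp only [sff, gApply, Fin.sum_univ_four]
  rw [siklos_entries]
  simp [Xl, Fl, Matrix.vecHead, Matrix.vecTail,
    amb112 θ ρ C β H u hβ hρ hs, amb113 θ ρ C β H u hβ hρ hs]
  field_simp

include hs in
lemma indM : inducedMetric β H (Fl θ ρ C) u = Matrix.of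
    ![![0, 0, β ^ 2 / (ρ * Real.exp (u 1)) ^ 2],
      ![0, β ^ 2 + (Real.cos θ / Real.sin θ) ^ 2 * β ^ 2, 0],
      ![β ^ 2 / (ρ * Real.exp (u 1)) ^ 2, 0,
        β ^ 2 / (ρ * Real.exp (u 1)) ^ 2 *
          H (u 2) (ρ * Real.exp (u 1))
            (-(Real.cos θ / Real.sin θ) * (ρ * Real.exp (u 1)) + C)]] := by
  have he : Real.exp (u 1) ≠ 0 := Real.exp_ne_zero _
  ext i j
  fin_cases i <;> fin_cases j <;>
    · simp only [inducedMetric, Matrix.of_apply, gApply, Fin.sum_univ_four]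
      rw [siklos_entries]
      simp [Fl, Fu_0, Fu_1, Fu_2, Matrix.vecHead, Matrix.vecTail]
      try field_simp [hρ.ne', hs]
      try ring

include hs in
lemma indInv : (inducedMetric β H (Fl θ ρ C) u)⁻¹ = Matrix.of
    ![![-((ρ * Real.exp (u 1)) ^ 2 / β ^ 2 *
          H (u 2) (ρ * Real.exp (u 1))
            (-(Real.cos θ / Real.sin θ) * (ρ * Real.exp (u 1)) + C)), 0,
        (ρ * Real.exp (u 1)) ^ 2 / β ^ 2],
      ![0, (β ^ 2 + (Real.cos θ / Real.sin θ) ^ 2 * β ^ 2)⁻¹, 0],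
      ![(ρ * Real.exp (u 1)) ^ 2 / β ^ 2, 0, 0]] := by
  have he : Real.exp (u 1) ≠ 0 := Real.exp_ne_zero _
  have hA : β ^ 2 + (Real.cos θ / Real.sin θ) ^ 2 * β ^ 2 ≠ 0 := by positivity
  apply Matrix.inv_eq_right_inv
  rw [indM θ ρ C β H u hβ hρ hs]
  ext i j
  fin_cases i <;> fin_cases j <;>
    · simp [Matrix.mul_apply, Fin.sum_univ_three, Matrix.one_apply,
        Matrix.vecHead, Matrix.vecTail]
      try field_simp [hρ.ne', hs]
      try ring

end main2

/-- under `H'₃ = −tanθ·H'₄` along `x₄ = −cotθ·x₃ + C`, the immersion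
`F(u) = (u₁, u₃, ρe^{u₂}, −cotθ·ρe^{u₂} + C)` has constant mean curvature `cosθ/β`. -/
theorem stmt_15 (β : ℝ) (hβ : 0 < β) (H : ℝ → ℝ → ℝ → ℝ)
    (hH : ContDiff ℝ (⊤ : ℕ∞) fun p : ℝ × ℝ × ℝ => H p.1 p.2.1 p.2.2)
    (θ ρ C : ℝ) (hθ : Real.sin θ * Real.cos θ ≠ 0) (hρ : 0 < ρ)
    (hH3 : ∀ a b c : ℝ, 0 < b → c = -(Real.cos θ / Real.sin θ) * b + C →
      H3 H a b c = -Real.tan θ * H4 H a b c)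
    (F ξ : (Fin 3 → ℝ) → Fin 4 → ℝ)
    (hF : F = fun u => ![u 0, u 2, ρ * Real.exp (u 1),
      -(Real.cos θ / Real.sin θ) * (ρ * Real.exp (u 1)) + C])
    (hξ : ξ = fun u => ![0, 0, ρ * Real.exp (u 1) / β * Real.cos θ,
      ρ * Real.exp (u 1) / β * Real.sin θ]) :
    ∀ u : Fin 3 → ℝ, meanCurv β H F ξ u = Real.cos θ / β := by
  intro u
  have hs : Real.sin θ ≠ 0 := left_ne_zero_of_mul hθ
  have hc : Real.cos θ ≠ 0 := right_ne_zero_of_mul hθ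
  have hb : β ≠ 0 := ne_of_gt hβ
  have hF' : F = Fl θ ρ C := hF
  have hξ' : ξ = Xl θ ρ C β := hξ
  subst hF'; subst hξ'
  have he : Real.exp (u 1) ≠ 0 := Real.exp_ne_zero _
  have hpy := Real.sin_sq_add_cos_sq θ
  simp only [meanCurv, Fin.sum_univ_three]
  rw [indInv θ ρ C β H u hb hρ hs]
  rw [sff00 θ ρ C β H u hb hρ, sff02 θ ρ C β H u hb hρ, sff20 θ ρ C β H u hb hρ,
    sff11 θ ρ C β H u hb hρ hs]
  simp [Matrix.vecHead, Matrix.vecTail]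
  field_simp
  try ring_nf
  try nlinarith [hpy, sq_nonneg (Real.sin θ), sq_nonneg (Real.cos θ)]
end

section
/- Let k ∈ ℝ with k ≠ 1 and take the defining function H(x₂,x₃,x₄) = x₃^{2k} (the homogeneous Siklos metric with ε = 1). The immersion F(u₁,u₂,u₃) = (u₁, u₃^{1−k}/(k−1), u₃, −u₂u₃/β), defined on V = {u ∈ ℝ³ : u₃ > 0} with unit normal ξ(u) = (u₃^{k+1}/β, 0, u₃/β, 0), is a parallel hypersurface of the Siklos metric (∇h ≡ 0) which is not totally geodesic (h ≢ 0). -/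
open scoped BigOperators

/-!
The unit normal `ξ` is checked directly. The point of the example is that `F` is totally
umbilic with a constant factor: its second fundamental form is `h = ĝ / β`. The Levi-Civita
connection of any nondegenerate symmetric metric field preserves that metric (an algebraic
identity between the Christoffel symbols and the first derivatives of the metric), so
`∇h = β⁻¹ ∇ĝ = 0`, while `h ≠ 0` because `ĝ₂₂ = 1`.
-/

open Filter Topology

section LeviCivita

variable {n : ℕ}

theorem pd_congr_of_eventuallyEq {f g : (Fin n → ℝ) → ℝ} {x : Fin n → ℝ} (h : f =ᶠ[𝓝 x] g)
    (i : Fin n) : pd i f x = pd i g x := by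
  have hupd : Tendsto (fun t => Function.update x i t) (𝓝 (x i)) (𝓝 x) := by
    have hcont : Continuous fun t : ℝ => Function.update x i t :=
      continuous_const.update i continuous_id
    simpa using hcont.tendsto (x i)
  exact Filter.EventuallyEq.deriv_eq (hupd.eventually h)

theorem pd_const_mul (i : Fin n) (c : ℝ) (f : (Fin n → ℝ) → ℝ) (x : Fin n → ℝ) :
    pd i (fun y => c * f y) x = c * pd i f x := by
  simp only [pd, deriv_const_mul_field']

theorem sum_christoffel_mul (g : (Fin n → ℝ) → Matrix (Fin n) (Fin n) ℝ) (x : Fin n → ℝ)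
    (hsymm : (g x).IsSymm) (hdet : IsUnit (g x).det) (k i j : Fin n) :
    ∑ l, christoffel g x l k i * g x l j =
      (pd k (fun y => g y j i) x + pd i (fun y => g y j k) x - pd j (fun y => g y k i) x) / 2 := by
  have hinv : ∀ m, ∑ l, g x j l * (g x)⁻¹ l m = (1 : Matrix (Fin n) (Fin n) ℝ) j m := fun m => by
    rw [← Matrix.mul_apply, Matrix.mul_nonsing_inv _ hdet]
  simp_rw [christoffel, Finset.mul_sum, Finset.sum_mul]
  rw [Finset.sum_comm]
  calc _ = ∑ m, (pd k (fun y => g y m i) x + pd i (fun y => g y m k) x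
          - pd m (fun y => g y k i) x) / 2 * ∑ l, g x j l * (g x)⁻¹ l m := by
        refine Finset.sum_congr rfl fun m _ => ?_
        rw [Finset.mul_sum]
        refine Finset.sum_congr rfl fun l _ => ?_
        rw [hsymm.apply l j]
        ring
    _ = _ := by simp [hinv, Matrix.one_apply]

theorem christoffel_metric_compatible (g : (Fin n → ℝ) → Matrix (Fin n) (Fin n) ℝ)
    (x : Fin n → ℝ) (hsymm : ∀ y, (g y).IsSymm) (hdet : IsUnit (g x).det) (k i j : Fin n) :
    pd k (fun y => g y i j) x =
      ∑ l, christoffel g x l k i * g x l j + ∑ l, christoffel g x l k j * g x i l := by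
  have hpd : ∀ a b c : Fin n, pd a (fun y => g y b c) x = pd a (fun y => g y c b) x :=
    fun a b c => congrArg (pd a · x) (funext fun y => ((hsymm y).apply b c).symm)
  have hswap : ∑ l, christoffel g x l k j * g x i l = ∑ l, christoffel g x l k j * g x l i :=
    Finset.sum_congr rfl fun l _ => by rw [(hsymm x).apply l i]
  rw [hswap, sum_christoffel_mul g x (hsymm x) hdet, sum_christoffel_mul g x (hsymm x) hdet,
    hpd k j i, hpd i j k, hpd j k i, hpd j i k]
  ring

end LeviCivita

section Hypersurface

theorem siklos_isSymm (β : ℝ) (H : ℝ → ℝ → ℝ → ℝ) (x : Fin 4 → ℝ) : (siklos β H x).IsSymm := by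
  refine Matrix.IsSymm.ext fun i j => ?_
  fin_cases i <;> fin_cases j <;> simp [siklos]

theorem gApply_comm {M : Matrix (Fin 4) (Fin 4) ℝ} (hM : M.IsSymm) (X Y : Fin 4 → ℝ) :
    gApply M X Y = gApply M Y X := by
  unfold gApply
  rw [Finset.sum_comm]
  refine Finset.sum_congr rfl fun i _ => Finset.sum_congr rfl fun j _ => ?_
  rw [hM.apply i j]
  ring

theorem inducedMetric_isSymm (β : ℝ) (H : ℝ → ℝ → ℝ → ℝ) (F : (Fin 3 → ℝ) → Fin 4 → ℝ)
    (u : Fin 3 → ℝ) : (inducedMetric β H F u).IsSymm :=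
  Matrix.IsSymm.ext fun _ _ => gApply_comm (siklos_isSymm β H (F u)) _ _

theorem nablah_eq_zero_of_sff_eventuallyEq {β : ℝ} {H : ℝ → ℝ → ℝ → ℝ}
    {F ξ : (Fin 3 → ℝ) → Fin 4 → ℝ} {u : Fin 3 → ℝ} (c : ℝ)
    (hsff : ∀ᶠ v in 𝓝 u, ∀ i j, sff β H F ξ i j v = c * inducedMetric β H F v i j)
    (hdet : IsUnit (inducedMetric β H F u).det) (k i j : Fin 3) :
    nablah β H F ξ k i j u = 0 := by
  have hpd : pd k (fun v => sff β H F ξ i j v) u = c * pd k (fun v => inducedMetric β H F v i j) u := by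
    rw [← pd_const_mul]
    exact pd_congr_of_eventuallyEq (hsff.mono fun v hv => hv i j) k
  have hcompat := christoffel_metric_compatible (inducedMetric β H F) u
    (inducedMetric_isSymm β H F) hdet k i j
  simp only [nablah, hpd, hsff.self_of_nhds, mul_left_comm _ c, ← Finset.mul_sum]
  linear_combination c * hcompat

end Hypersurface

namespace PowerSiklos

variable (β k : ℝ)

noncomputable def immersion : (Fin 3 → ℝ) → Fin 4 → ℝ :=
  fun u => ![u 0, u 2 ^ (1 - k) / (k - 1), u 2, -u 1 * u 2 / β]

noncomputable def normal : (Fin 3 → ℝ) → Fin 4 → ℝ :=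
  fun u => ![u 2 ^ (k + 1) / β, 0, u 2 / β, 0]

noncomputable def metric (s : ℝ) : Matrix (Fin 4) (Fin 4) ℝ :=
  !![0, β^2/s^2, 0, 0;
     β^2/s^2, β^2/s^2 * s^(2*k), 0, 0;
     0, 0, β^2/s^2, 0;
     0, 0, 0, β^2/s^2]

noncomputable def metricInv (s : ℝ) : Matrix (Fin 4) (Fin 4) ℝ :=
  !![-(s^k)^2*s^2/β^2, s^2/β^2, 0, 0;
     s^2/β^2, 0, 0, 0;
     0, 0, s^2/β^2, 0;
     0, 0, 0, s^2/β^2]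

noncomputable def metricDeriv (s : ℝ) : Matrix (Fin 4) (Fin 4) ℝ :=
  !![0, -2*β^2/s^3, 0, 0;
     -2*β^2/s^3, (2*k-2)*β^2*(s^k)^2/s^3, 0, 0;
     0, 0, -2*β^2/s^3, 0;
     0, 0, 0, -2*β^2/s^3]

noncomputable def christoffelSymbols (s : ℝ) : Fin 4 → Fin 4 → Fin 4 → ℝ :=
  ![![![0,0,-1/s,0], ![0,0,k*(s^k)^2/s,0], ![-1/s,k*(s^k)^2/s,0,0], ![0,0,0,0]],
    ![![0,0,0,0], ![0,0,-1/s,0], ![0,-1/s,0,0], ![0,0,0,0]],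
    ![![0,1/s,0,0], ![1/s,-(k-1)*(s^k)^2/s,0,0], ![0,0,-1/s,0], ![0,0,0,1/s]],
    ![![0,0,0,0], ![0,0,0,0], ![0,0,0,-1/s], ![0,0,-1/s,0]]]

noncomputable def tangent (u : Fin 3 → ℝ) : Fin 3 → Fin 4 → ℝ :=
  ![![1,0,0,0], ![0,0,0,-(u 2)/β], ![0, -((u 2)^k)⁻¹, 1, -(u 1)/β]]

noncomputable def covDeriv (u : Fin 3 → ℝ) : Fin 3 → Fin 3 → Fin 4 → ℝ :=
  ![![![0,0,0,0], ![0,0,0,0], ![-1/u 2, 0, -((u 2)^k)⁻¹/u 2, 0]],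
    ![![0,0,0,0], ![0,0,u 2/β^2,0], ![0,0,u 1/β^2,0]],
    ![![-1/u 2, 0, -((u 2)^k)⁻¹/u 2, 0], ![0,0,u 1/β^2,0],
      ![-2*k*(u 2)^k/u 2, (k+2)*((u 2)^k)⁻¹/u 2, -k/u 2 + (u 1)^2/(u 2*β^2), 2*u 1/(u 2*β)]]]

noncomputable def firstFundamentalForm (u : Fin 3 → ℝ) : Matrix (Fin 3) (Fin 3) ℝ :=
  !![0, 0, -β^2*((u 2)^k)⁻¹/(u 2)^2;
     0, 1, u 1/u 2;
     -β^2*((u 2)^k)⁻¹/(u 2)^2, u 1/u 2, (2*β^2+(u 1)^2)/(u 2)^2]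

theorem eventually_nhds_of_forall_pos {p : (Fin 3 → ℝ) → Prop} {u : Fin 3 → ℝ} (hu : 0 < u 2)
    (h : ∀ v : Fin 3 → ℝ, 0 < v 2 → p v) : ∀ᶠ v in 𝓝 u, p v :=
  eventually_of_mem ((isOpen_lt continuous_const (continuous_apply 2)).mem_nhds hu) h

theorem rpow_two_mul {s : ℝ} (hs : 0 < s) : s ^ (2*k) = (s^k)^2 := by
  rw [mul_comm, Real.rpow_mul hs.le, Real.rpow_two]

theorem siklos_eq_metric (x : Fin 4 → ℝ) :
    siklos β (fun _ b _ => b ^ (2 * k)) x = metric β k (x 2) := by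
  ext i j
  fin_cases i <;> fin_cases j <;> simp [siklos, metric]

theorem siklos_inv_eq {x : Fin 4 → ℝ} (hβ : β ≠ 0) (hx : 0 < x 2) :
    (siklos β (fun _ b _ => b ^ (2 * k)) x)⁻¹ = metricInv β k (x 2) := by
  have hs : x 2 ≠ 0 := hx.ne'
  refine Matrix.inv_eq_right_inv ?_
  rw [siklos_eq_metric]
  ext i j
  fin_cases i <;> fin_cases j <;>
    · simp [metric, metricInv, Matrix.mul_apply, Fin.sum_univ_four, rpow_two_mul k hx]
      try field_simp
      try ring

theorem hasDerivAt_const_div_sq (c : ℝ) {s : ℝ} (hs : s ≠ 0) :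
    HasDerivAt (fun t : ℝ => c / t^2) (-2*c/s^3) s := by
  refine ((hasDerivAt_const s c).div (hasDerivAt_pow 2 s) (pow_ne_zero 2 hs)).congr_deriv ?_
  field_simp
  ring

theorem hasDerivAt_metric_one_one {s : ℝ} (hs : 0 < s) :
    HasDerivAt (fun t : ℝ => β^2/t^2 * t^(2*k)) ((2*k-2)*β^2*(s^k)^2/s^3) s := by
  refine ((hasDerivAt_const_div_sq (β^2) hs.ne').mul
    (Real.hasDerivAt_rpow_const (p := 2*k) (Or.inl hs.ne'))).congr_deriv ?_
  rw [rpow_two_mul k hs, Real.rpow_sub hs, Real.rpow_one, rpow_two_mul k hs]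
  field_simp
  ring

theorem pd_siklos {x : Fin 4 → ℝ} (hx : 0 < x 2) (i l j : Fin 4) :
    pd i (fun y => siklos β (fun _ b _ => b ^ (2 * k)) y l j) x
      = if i = 2 then metricDeriv β k (x 2) l j else 0 := by
  simp only [pd, siklos_eq_metric]
  fin_cases i
  · simp [Function.update_of_ne, metric]
  · simp [Function.update_of_ne, metric]
  · fin_cases l <;> fin_cases j <;>
      simp [metric, metricDeriv, (hasDerivAt_const_div_sq (β^2) hx.ne').deriv,
        (hasDerivAt_metric_one_one β k hx).deriv]
  · simp [Function.update_of_ne, metric]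

theorem christoffel_siklos {x : Fin 4 → ℝ} (hβ : β ≠ 0) (hx : 0 < x 2) (c i j : Fin 4) :
    christoffel (siklos β (fun _ b _ => b ^ (2 * k))) x c i j
      = christoffelSymbols k (x 2) c i j := by
  have hs : x 2 ≠ 0 := hx.ne'
  have hP : (x 2)^k ≠ 0 := (Real.rpow_pos_of_pos hx k).ne'
  unfold christoffel
  rw [siklos_inv_eq β k hβ hx]
  fin_cases c <;> fin_cases i <;> fin_cases j <;>
    · simp [Fin.sum_univ_four, pd_siklos β k hx, metricInv, metricDeriv, christoffelSymbols]
      try field_simp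
      try ring

theorem hasDerivAt_rpow_one_sub_div {s : ℝ} (hk : k ≠ 1) (hs : 0 < s) :
    HasDerivAt (fun t : ℝ => t^(1-k)/(k-1)) (-((s^k)⁻¹)) s := by
  refine ((Real.hasDerivAt_rpow_const (p := 1-k) (Or.inl hs.ne')).div_const (k-1)).congr_deriv ?_
  rw [show (1-k-1 : ℝ) = -k by ring, Real.rpow_neg hs.le]
  have hk1 : k - 1 ≠ 0 := sub_ne_zero.mpr hk
  field_simp
  ring

theorem Fu_immersion {u : Fin 3 → ℝ} (hk : k ≠ 1) (hu : 0 < u 2) (i : Fin 3) :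
    Fu (immersion β k) i u = tangent β k u i := by
  ext m
  unfold Fu pd immersion
  fin_cases i <;> fin_cases m <;>
    simp [tangent, Function.update_of_ne, (hasDerivAt_rpow_one_sub_div k hk hu).deriv]

theorem hasDerivAt_neg_inv_rpow {s : ℝ} (hs : 0 < s) :
    HasDerivAt (fun t : ℝ => -((t^k)⁻¹)) (k*((s^k)⁻¹)/s) s := by
  have hP : s^k ≠ 0 := (Real.rpow_pos_of_pos hs k).ne'
  refine ((Real.hasDerivAt_rpow_const (p := k) (Or.inl hs.ne')).inv hP).neg.congr_deriv ?_
  rw [Real.rpow_sub hs, Real.rpow_one]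
  field_simp

theorem ambD_immersion {u : Fin 3 → ℝ} (hβ : β ≠ 0) (hk : k ≠ 1) (hu : 0 < u 2) (i j : Fin 3) :
    ambD β (fun _ b _ => b ^ (2 * k)) (immersion β k) i j u = covDeriv β k u i j := by
  have hF2 : immersion β k u 2 = u 2 := by simp [immersion]
  have hP : (u 2)^k ≠ 0 := (Real.rpow_pos_of_pos hu k).ne'
  have hs : u 2 ≠ 0 := hu.ne'
  ext m
  have hpd : pd i (fun v => Fu (immersion β k) j v m) u = pd i (fun v => tangent β k v j m) u :=
    pd_congr_of_eventuallyEq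
      (eventually_nhds_of_forall_pos hu fun v hv => by rw [Fu_immersion β k hk hv]) i
  unfold ambD
  rw [hpd]
  simp only [christoffel_siklos β k hβ (hF2 ▸ hu), Fu_immersion β k hk hu, hF2, Fin.sum_univ_four]
  unfold pd
  fin_cases i <;> fin_cases j <;> fin_cases m <;>
    · simp [tangent, christoffelSymbols, covDeriv, Function.update_of_ne,
        (hasDerivAt_neg_inv_rpow k hu).deriv]
      try field_simp
      try ring

theorem inducedMetric_immersion {u : Fin 3 → ℝ} (hβ : β ≠ 0) (hk : k ≠ 1) (hu : 0 < u 2) :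
    inducedMetric β (fun _ b _ => b ^ (2 * k)) (immersion β k) u = firstFundamentalForm β k u := by
  have hP : (u 2)^k ≠ 0 := (Real.rpow_pos_of_pos hu k).ne'
  have hs : u 2 ≠ 0 := hu.ne'
  ext i j
  simp only [inducedMetric, gApply, Matrix.of_apply, siklos_eq_metric, Fu_immersion β k hk hu,
    Fin.sum_univ_four]
  fin_cases i <;> fin_cases j <;>
    · simp [immersion, metric, tangent, firstFundamentalForm, rpow_two_mul k hu]
      try field_simp
      try ring

theorem isUnit_det_firstFundamentalForm (hβ : β ≠ 0) {u : Fin 3 → ℝ} (hu : 0 < u 2) :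
    IsUnit (firstFundamentalForm β k u).det := by
  have hP : (u 2)^k ≠ 0 := (Real.rpow_pos_of_pos hu k).ne'
  have hdet : (firstFundamentalForm β k u).det = -(β^2*((u 2)^k)⁻¹/(u 2)^2)^2 := by
    simp [firstFundamentalForm, Matrix.det_fin_three]
    ring
  rw [hdet, isUnit_iff_ne_zero]
  simp [hβ, hP, hu.ne']

theorem sff_immersion {u : Fin 3 → ℝ} (hβ : β ≠ 0) (hk : k ≠ 1) (hu : 0 < u 2) (i j : Fin 3) :
    sff β (fun _ b _ => b ^ (2 * k)) (immersion β k) (normal β k) i j u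
      = β⁻¹ * firstFundamentalForm β k u i j := by
  have hP : (u 2)^k ≠ 0 := (Real.rpow_pos_of_pos hu k).ne'
  have hs : u 2 ≠ 0 := hu.ne'
  simp only [sff, gApply, siklos_eq_metric, ambD_immersion β k hβ hk hu, Fin.sum_univ_four]
  fin_cases i <;> fin_cases j <;>
    · simp [immersion, normal, metric, covDeriv, firstFundamentalForm,
        Real.rpow_add_one hs, rpow_two_mul k hu]
      try field_simp
      try ring

theorem gApply_normal_normal {u : Fin 3 → ℝ} (hβ : β ≠ 0) (hu : 0 < u 2) :
    gApply (siklos β (fun _ b _ => b ^ (2 * k)) (immersion β k u)) (normal β k u) (normal β k u)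
      = 1 := by
  have hs : u 2 ≠ 0 := hu.ne'
  simp [gApply, siklos_eq_metric, Fin.sum_univ_four, immersion, normal, metric]
  field_simp

theorem gApply_normal_Fu {u : Fin 3 → ℝ} (hk : k ≠ 1) (hu : 0 < u 2) (i : Fin 3) :
    gApply (siklos β (fun _ b _ => b ^ (2 * k)) (immersion β k u)) (normal β k u)
      (Fu (immersion β k) i u) = 0 := by
  have hP : (u 2)^k ≠ 0 := (Real.rpow_pos_of_pos hu k).ne'
  have hs : u 2 ≠ 0 := hu.ne'
  simp only [gApply, siklos_eq_metric, Fu_immersion β k hk hu, Fin.sum_univ_four]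
  fin_cases i <;>
    · simp [immersion, normal, metric, tangent, Real.rpow_add_one hs, rpow_two_mul k hu]
      try field_simp
      try ring

end PowerSiklos

/-- for `H(x₂,x₃,x₄) = x₃^{2k}` with `k ≠ 1`, the immersion
`F(u) = (u₁, u₃^{1−k}/(k−1), u₃, −u₂u₃/β)` is parallel and not totally geodesic. -/
theorem stmt_18 (β : ℝ) (hβ : 0 < β) (k : ℝ) (hk : k ≠ 1)
    (H : ℝ → ℝ → ℝ → ℝ) (hH : H = fun _ b _ => b ^ (2 * k))
    (F ξ : (Fin 3 → ℝ) → Fin 4 → ℝ)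
    (hF : F = fun u => ![u 0, u 2 ^ (1 - k) / (k - 1), u 2, -u 1 * u 2 / β])
    (hξ : ξ = fun u => ![u 2 ^ (k + 1) / β, 0, u 2 / β, 0]) :
    (∀ u : Fin 3 → ℝ, 0 < u 2 →
      gApply (siklos β H (F u)) (ξ u) (ξ u) = 1 ∧
      ∀ i : Fin 3, gApply (siklos β H (F u)) (ξ u) (Fu F i u) = 0) ∧
    (∀ u : Fin 3 → ℝ, 0 < u 2 → ∀ k' i j : Fin 3, nablah β H F ξ k' i j u = 0) ∧
    ¬(∀ u : Fin 3 → ℝ, 0 < u 2 → ∀ i j : Fin 3, sff β H F ξ i j u = 0) := by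
  subst hH
  obtain rfl : F = PowerSiklos.immersion β k := hF
  obtain rfl : ξ = PowerSiklos.normal β k := hξ
  have hβ0 : β ≠ 0 := hβ.ne'
  have hsff : ∀ u : Fin 3 → ℝ, 0 < u 2 → ∀ i j,
      sff β _ (PowerSiklos.immersion β k) (PowerSiklos.normal β k) i j u
        = β⁻¹ * inducedMetric β _ (PowerSiklos.immersion β k) u i j := fun u hu i j => by
    rw [PowerSiklos.sff_immersion β k hβ0 hk hu, PowerSiklos.inducedMetric_immersion β k hβ0 hk hu]
  refine ⟨fun u hu => ⟨PowerSiklos.gApply_normal_normal β k hβ0 hu,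
      PowerSiklos.gApply_normal_Fu β k hk hu⟩,
    fun u hu => nablah_eq_zero_of_sff_eventuallyEq β⁻¹ ?_ ?_, fun htg => ?_⟩
  · exact PowerSiklos.eventually_nhds_of_forall_pos hu hsff
  · rw [PowerSiklos.inducedMetric_immersion β k hβ0 hk hu]
    exact PowerSiklos.isUnit_det_firstFundamentalForm β k hβ0 hu
  · have hu : (0 : ℝ) < (![0, 0, 1] : Fin 3 → ℝ) 2 := by simp
    have h11 := htg _ hu 1 1
    rw [PowerSiklos.sff_immersion β k hβ0 hk hu] at h11
    simp [PowerSiklos.firstFundamentalForm, hβ0] at h11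
end
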